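/- arXiv:2006.08848 — 2 statements merged into one kernel-verified Lean document; each statement's English description precedes it below -/
import Mathlib

section
/- Let F_1, …, F_N be L_F-smooth convex functions and F = (1/N)∑ F_i with minimizer w*. Then for all w, (1/N)∑_{i=1}^N ‖∇F_i(w) - ∇F(w)‖² ≤ 4 L_F (F(w) - F(w*)) + 2 (1/N)∑_{i=1}^N ‖∇F_i(w*)‖². -/
/-!
Split `∇Fᵢ(w) = (∇Fᵢ(w) - ∇Fᵢ(w*)) + ∇Fᵢ(w*)`. The spread of the gradients around their mean
is at most their mean squared norm, and `‖a + b‖² ≤ 2‖a‖² + 2‖b‖²`. The first part is controlled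
by co-coercivity of smooth convex functions,
`‖∇f x - ∇f y‖² ≤ 2L (f x - f y - ⟪∇f y, x - y⟫)`; after averaging over `i` the linear terms
drop out because `∇F(w*) = 0`.
-/

open Set Finset InnerProductSpace

section

variable {E : Type*} [NormedAddCommGroup E] [InnerProductSpace ℝ E]

theorem sum_norm_sub_inv_card_smul_sum_sq_le {ι : Type*} (s : Finset ι) (a : ι → E) :
    ∑ i ∈ s, ‖a i - (#s : ℝ)⁻¹ • ∑ j ∈ s, a j‖ ^ 2 ≤ ∑ i ∈ s, ‖a i‖ ^ 2 := by
  set n : ℝ := (#s : ℝ) with hn_def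
  set S := ∑ j ∈ s, a j with hS
  -- Holds also for `s = ∅`, where `n⁻¹ = 0`.
  have hn : n * n⁻¹ ^ 2 = n⁻¹ := by simpa [sq, mul_assoc] using inv_mul_mul_self n⁻¹
  have hexpand : ∑ i ∈ s, ‖a i - n⁻¹ • S‖ ^ 2 = ∑ i ∈ s, ‖a i‖ ^ 2 - n⁻¹ * ‖S‖ ^ 2 := by
    simp only [norm_sub_sq_real, sum_add_distrib, sum_sub_distrib, ← mul_sum, ← sum_inner,
      real_inner_smul_right, norm_smul, sum_const, nsmul_eq_mul, Real.norm_eq_abs, mul_pow,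
      sq_abs]
    rw [← hS, ← hn_def, real_inner_self_eq_norm_sq]
    linear_combination ‖S‖ ^ 2 * hn
  rw [hexpand]
  have : 0 ≤ n⁻¹ * ‖S‖ ^ 2 := by positivity
  linarith

variable [CompleteSpace E] {f : E → ℝ} {f' : E → E} {L : ℝ}

theorem HasGradientAt.hasDerivAt_comp_add_smul {g x v : E} {t : ℝ}
    (hf : HasGradientAt f g (x + t • v)) :
    HasDerivAt (fun s : ℝ => f (x + s • v)) ⟪g, v⟫_ℝ t := by
  have hline : HasDerivAt (fun s : ℝ => x + s • v) v t := by
    simpa using ((hasDerivAt_id t).smul_const v).const_add x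
  have h := hf.hasFDerivAt.comp_hasDerivAt t hline
  simp only [toDual_apply_apply] at h
  exact h

theorem HasGradientAt.sub_inner {g x : E} (hf : HasGradientAt f g x) (a : E) :
    HasGradientAt (fun z => f z - ⟪a, z⟫_ℝ) (g - a) x := by
  rw [hasGradientAt_iff_hasFDerivAt, map_sub]
  exact hf.hasFDerivAt.sub (toDual ℝ E a).hasFDerivAt

theorem ConvexOn.add_inner_le_of_hasGradientAt {g x : E} (hconv : ConvexOn ℝ univ f)
    (hf : HasGradientAt f g x) (z : E) :
    f x + ⟪g, z - x⟫_ℝ ≤ f z := by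
  have hline : ConvexOn ℝ univ (fun t : ℝ => f (x + t • (z - x))) := by
    simpa [Function.comp_def, AffineMap.lineMap_apply, add_comm] using
      hconv.comp_affineMap (AffineMap.lineMap x z)
  have hderiv : HasDerivAt (fun t : ℝ => f (x + t • (z - x))) ⟪g, z - x⟫_ℝ 0 :=
    HasGradientAt.hasDerivAt_comp_add_smul (by simpa using hf)
  have := hline.le_slope_of_hasDerivAt (mem_univ 0) (mem_univ 1) one_pos hderiv
  simp only [slope, sub_zero, inv_one, zero_smul, add_zero, one_smul, add_sub_cancel,
    smul_eq_mul, one_mul, vsub_eq_sub] at this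
  linarith

theorem le_add_inner_add_sq_of_lipschitz_gradient (hf : ∀ x, HasGradientAt f (f' x) x)
    (hlip : ∀ x y, ‖f' x - f' y‖ ≤ L * ‖x - y‖) (x y : E) :
    f y ≤ f x + ⟪f' x, y - x⟫_ℝ + L / 2 * ‖y - x‖ ^ 2 := by
  set v := y - x
  let ψ : ℝ → ℝ := fun t => f (x + t • v) - t * ⟪f' x, v⟫_ℝ - L / 2 * t ^ 2 * ‖v‖ ^ 2
  have hψ : ∀ t, HasDerivAt ψ (⟪f' (x + t • v) - f' x, v⟫_ℝ - L * t * ‖v‖ ^ 2) t := by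
    intro t
    have h := (((hf (x + t • v)).hasDerivAt_comp_add_smul).sub
      ((hasDerivAt_id t).mul_const ⟪f' x, v⟫_ℝ)).sub
      (((hasDerivAt_pow 2 t).const_mul (L / 2)).mul_const (‖v‖ ^ 2))
    refine h.congr_deriv ?_
    rw [inner_sub_left]
    simp only [Nat.cast_ofNat]
    ring
  have hψ_nonpos : ∀ t ∈ interior (Icc (0 : ℝ) 1),
      ⟪f' (x + t • v) - f' x, v⟫_ℝ - L * t * ‖v‖ ^ 2 ≤ 0 := by
    intro t ht
    rw [interior_Icc] at ht
    have hgrad : ‖f' (x + t • v) - f' x‖ ≤ L * t * ‖v‖ := by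
      simpa [norm_smul, abs_of_pos ht.1, mul_assoc] using hlip (x + t • v) x
    refine sub_nonpos.2 ?_
    calc ⟪f' (x + t • v) - f' x, v⟫_ℝ ≤ ‖f' (x + t • v) - f' x‖ * ‖v‖ := real_inner_le_norm _ _
      _ ≤ L * t * ‖v‖ * ‖v‖ := by gcongr
      _ = L * t * ‖v‖ ^ 2 := by ring
  have hanti : AntitoneOn ψ (Icc 0 1) :=
    antitoneOn_of_hasDerivWithinAt_nonpos (convex_Icc 0 1)
      (fun t _ => (hψ t).continuousAt.continuousWithinAt)
      (fun t _ => (hψ t).hasDerivWithinAt) hψ_nonpos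
  have h01 := hanti (left_mem_Icc.2 zero_le_one) (right_mem_Icc.2 zero_le_one) zero_le_one
  simp only [ψ, v, zero_smul, add_zero, zero_mul, sub_zero, one_smul, add_sub_cancel,
    one_mul, one_pow, mul_one, ne_eq, OfNat.ofNat_ne_zero, not_false_eq_true, zero_pow,
    mul_zero] at h01
  linarith

theorem sq_norm_le_of_isMinOn_of_lipschitz_gradient (hL : 0 < L)
    (hf : ∀ x, HasGradientAt f (f' x) x) (hlip : ∀ x y, ‖f' x - f' y‖ ≤ L * ‖x - y‖)
    {y : E} (hmin : IsMinOn f univ y) (x : E) :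
    ‖f' x‖ ^ 2 ≤ 2 * L * (f x - f y) := by
  -- One gradient step of length `1 / L` from `x`.
  have hstep := le_add_inner_add_sq_of_lipschitz_gradient hf hlip x (x - L⁻¹ • f' x)
  have hdecrease : f (x - L⁻¹ • f' x) ≤ f x - ‖f' x‖ ^ 2 / (2 * L) := by
    rw [sub_sub_cancel_left, inner_neg_right, real_inner_smul_right, real_inner_self_eq_norm_sq,
      norm_neg, norm_smul, Real.norm_of_nonneg (inv_nonneg.2 hL.le)] at hstep
    convert hstep using 1
    field_simp
    ring
  have hmin' : f y ≤ f (x - L⁻¹ • f' x) := hmin (mem_univ _)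
  have : ‖f' x‖ ^ 2 / (2 * L) ≤ f x - f y := by linarith
  rwa [div_le_iff₀ (by positivity), mul_comm] at this

theorem ConvexOn.sq_norm_sub_le_of_lipschitz_gradient (hconv : ConvexOn ℝ univ f)
    (hf : ∀ x, HasGradientAt f (f' x) x) (hlip : ∀ x y, ‖f' x - f' y‖ ≤ L * ‖x - y‖) (x y : E) :
    ‖f' x - f' y‖ ^ 2 ≤ 2 * L * (f x - f y - ⟪f' y, x - y⟫_ℝ) := by
  rcases le_or_gt L 0 with hL | hL
  · have hconst : f' x = f' y := by
      rw [← sub_eq_zero, ← norm_le_zero_iff]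
      exact (hlip x y).trans (mul_nonpos_of_nonpos_of_nonneg hL (norm_nonneg _))
    have h₁ := hconv.add_inner_le_of_hasGradientAt (hf y) x
    have h₂ := hconv.add_inner_le_of_hasGradientAt (hf x) y
    rw [hconst, ← neg_sub x y, inner_neg_right] at h₂
    rw [hconst, sub_self, norm_zero, show f x - f y - ⟪f' y, x - y⟫_ℝ = 0 by linarith]
    simp
  · -- Tilting `f` by the linear map `⟪∇f y, ·⟫` makes `y` a global minimizer.
    set g : E → ℝ := fun z => f z - ⟪f' y, z⟫_ℝ
    have hg : ∀ z, HasGradientAt g (f' z - f' y) z := fun z => (hf z).sub_inner (f' y)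
    have hgconv : ConvexOn ℝ univ g :=
      hconv.sub ((innerₗ E (f' y)).concaveOn convex_univ)
    have hgmin : IsMinOn g univ y := fun z _ => by
      simpa using hgconv.add_inner_le_of_hasGradientAt (hg y) z
    have hglip : ∀ u z, ‖(f' u - f' y) - (f' z - f' y)‖ ≤ L * ‖u - z‖ := fun u z => by
      simpa using hlip u z
    refine (sq_norm_le_of_isMinOn_of_lipschitz_gradient hL hg hglip hgmin x).trans_eq ?_
    simp only [g, inner_sub_right]
    ring

end

theorem bounded_diversity_strongly_convex_general
    {d N : ℕ}
    (F : Fin N → EuclideanSpace ℝ (Fin d) → ℝ)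
    (F' : Fin N → EuclideanSpace ℝ (Fin d) → EuclideanSpace ℝ (Fin d))
    (LF : ℝ)
    (hconv : ∀ i, ConvexOn ℝ univ (F i))
    (hdiff : ∀ i x, HasGradientAt (F i) (F' i x) x)
    (hlip : ∀ i x y, ‖F' i x - F' i y‖ ≤ LF * ‖x - y‖)
    (wstar : EuclideanSpace ℝ (Fin d))
    (hgradmin : (1 / N : ℝ) • ∑ i, F' i wstar = 0)
    (w : EuclideanSpace ℝ (Fin d)) :
    (1 / N : ℝ) * ∑ i, ‖F' i w - (1 / N : ℝ) • ∑ j, F' j w‖ ^ 2 ≤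
      4 * LF * ((1 / N : ℝ) * ∑ i, F i w - (1 / N : ℝ) * ∑ i, F i wstar)
        + 2 * ((1 / N : ℝ) * ∑ i, ‖F' i wstar‖ ^ 2) := by
  have hvariance := sum_norm_sub_inv_card_smul_sum_sq_le univ fun i => F' i w
  rw [card_univ, Fintype.card_fin, ← one_div] at hvariance
  have hsplit : ∀ i, ‖F' i w‖ ^ 2 ≤
      4 * LF * (F i w - F i wstar - ⟪F' i wstar, w - wstar⟫_ℝ) + 2 * ‖F' i wstar‖ ^ 2 := by
    intro i
    have hcoco := (hconv i).sq_norm_sub_le_of_lipschitz_gradient (hdiff i) (hlip i) w wstar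
    calc ‖F' i w‖ ^ 2 ≤ (‖F' i w - F' i wstar‖ + ‖F' i wstar‖) ^ 2 := by
          gcongr; exact norm_le_norm_sub_add _ _
      _ ≤ 2 * (‖F' i w - F' i wstar‖ ^ 2 + ‖F' i wstar‖ ^ 2) := add_sq_le
      _ ≤ _ := by linarith
  calc (1 / N : ℝ) * ∑ i, ‖F' i w - (1 / N : ℝ) • ∑ j, F' j w‖ ^ 2
      ≤ (1 / N : ℝ) * ∑ i, ‖F' i w‖ ^ 2 := mul_le_mul_of_nonneg_left hvariance (by positivity)
    _ ≤ (1 / N : ℝ) * ∑ i, (4 * LF * (F i w - F i wstar - ⟪F' i wstar, w - wstar⟫_ℝ)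
          + 2 * ‖F' i wstar‖ ^ 2) := by gcongr with i; exact hsplit i
    _ = 4 * LF * ((1 / N : ℝ) * ∑ i, F i w - (1 / N : ℝ) * ∑ i, F i wstar
          - ⟪(1 / N : ℝ) • ∑ i, F' i wstar, w - wstar⟫_ℝ)
          + 2 * ((1 / N : ℝ) * ∑ i, ‖F' i wstar‖ ^ 2) := by
      simp only [sum_add_distrib, sum_sub_distrib, ← mul_sum, ← sum_inner, real_inner_smul_left]
      ring
    _ = _ := by rw [hgradmin, inner_zero_left, sub_zero]

theorem bounded_diversity_strongly_convex
    {d N : ℕ} (hN : 0 < N)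
    (F : Fin N → EuclideanSpace ℝ (Fin d) → ℝ)
    (F' : Fin N → EuclideanSpace ℝ (Fin d) → EuclideanSpace ℝ (Fin d))
    (LF : ℝ)
    (hconv : ∀ i, ConvexOn ℝ univ (F i))
    (hdiff : ∀ i x, HasGradientAt (F i) (F' i x) x)
    (hlip : ∀ i x y, ‖F' i x - F' i y‖ ≤ LF * ‖x - y‖)
    (wstar : EuclideanSpace ℝ (Fin d))
    (hmin : ∀ w, (1 / N : ℝ) * ∑ i, F i wstar ≤ (1 / N : ℝ) * ∑ i, F i w)
    (hgradmin : (1 / N : ℝ) • ∑ i, F' i wstar = 0)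
    (w : EuclideanSpace ℝ (Fin d)) :
    (1 / N : ℝ) * ∑ i, ‖F' i w - (1 / N : ℝ) • ∑ j, F' j w‖ ^ 2 ≤
      4 * LF * ((1 / N : ℝ) * ∑ i, F i w - (1 / N : ℝ) * ∑ i, F i wstar)
        + 2 * ((1 / N : ℝ) * ∑ i, ‖F' i wstar‖ ^ 2) :=
  bounded_diversity_strongly_convex_general F F' LF hconv hdiff hlip wstar hgradmin w
end

section
/- Let f_i be L-smooth functions and F_i the Moreau envelopes F_i(w) = min_θ { f_i(θ) + (λ/2)‖θ - w‖² } with λ > 2√2 L, and F = (1/N)∑ F_i. Assume the diversity bound (1/N)∑_i ‖∇f_i(w) - ∇f(w)‖² ≤ σ_f² holds pointwise (where f = (1/N)∑ f_i). Then (1/N)∑_{i=1}^N ‖∇F_i(w) - ∇F(w)‖² ≤ (8L²/(λ² - 8L²)) ‖∇F(w)‖² + (2λ²/(λ² - 8L²)) σ_f². -/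
/-!
At the proximal point θ̂ᵢ the first-order condition gives ∇Fᵢ(w) = ∇fᵢ(θ̂ᵢ), so by L-smoothness
‖∇Fᵢ(w) - ∇fᵢ(w)‖ ≤ L ‖θ̂ᵢ - w‖ = (L/λ) ‖∇Fᵢ(w)‖. Splitting ∇Fᵢ(w) into this perturbation plus
∇fᵢ(w), the spread of the ∇Fᵢ(w) around their mean is at most twice the mean square of the
perturbations plus twice the diversity σ_f² of the ∇fᵢ(w). The mean square of the ∇Fᵢ(w) is
their spread plus ‖∇F(w)‖², so the spread appears on both sides with factor 2L²/λ² < 1/4, and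
solving for it gives the bound.
-/

open Finset

theorem norm_add_sq_le_two_mul {E : Type*} [SeminormedAddCommGroup E] (a b : E) :
    ‖a + b‖ ^ 2 ≤ 2 * (‖a‖ ^ 2 + ‖b‖ ^ 2) :=
  (pow_le_pow_left₀ (norm_nonneg _) (norm_add_le a b) 2).trans add_sq_le

section FiniteFamily

variable {ι : Type*} [Fintype ι]

theorem average_norm_add_sub_average_sq_le {E : Type*} [SeminormedAddCommGroup E] [Module ℝ E]
    (x y : ι → E) :
    (1 / Fintype.card ι : ℝ) * ∑ i, ‖x i + y i - (1 / Fintype.card ι : ℝ) • ∑ j, (x j + y j)‖ ^ 2 ≤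
      2 * ((1 / Fintype.card ι : ℝ) * ∑ i, ‖x i - (1 / Fintype.card ι : ℝ) • ∑ j, x j‖ ^ 2) +
        2 * ((1 / Fintype.card ι : ℝ) * ∑ i, ‖y i - (1 / Fintype.card ι : ℝ) • ∑ j, y j‖ ^ 2) := by
  rw [← mul_add, ← mul_add, mul_left_comm]
  gcongr
  rw [mul_add, mul_sum, mul_sum, ← sum_add_distrib]
  gcongr with i
  rw [sum_add_distrib, smul_add, add_sub_add_comm, ← mul_add]
  exact norm_add_sq_le_two_mul _ _

variable {V : Type*} [NormedAddCommGroup V] [InnerProductSpace ℝ V]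

theorem average_norm_sub_average_sq (x : ι → V) :
    (1 / Fintype.card ι : ℝ) * ∑ i, ‖x i - (1 / Fintype.card ι : ℝ) • ∑ j, x j‖ ^ 2 =
      (1 / Fintype.card ι : ℝ) * ∑ i, ‖x i‖ ^ 2 - ‖(1 / Fintype.card ι : ℝ) • ∑ j, x j‖ ^ 2 := by
  set n : ℝ := (Fintype.card ι : ℝ)
  set m := (1 / n) • ∑ j, x j
  rcases eq_or_ne n 0 with hn | hn
  · simp [m, hn]
  have hsum : ∑ j, x j = n • m := by simp [m, smul_smul, hn]
  have hexpand : ∑ i, ‖x i - m‖ ^ 2 = ∑ i, ‖x i‖ ^ 2 - 2 * inner ℝ (∑ i, x i) m + n * ‖m‖ ^ 2 := by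
    simp only [norm_sub_sq_real, sum_add_distrib, sum_sub_distrib, ← mul_sum, sum_inner,
      sum_const, card_univ, nsmul_eq_mul, n]
  rw [hexpand, hsum, real_inner_smul_left, real_inner_self_eq_norm_sq]
  field_simp
  ring

theorem average_norm_sub_average_sq_le (x : ι → V) :
    (1 / Fintype.card ι : ℝ) * ∑ i, ‖x i - (1 / Fintype.card ι : ℝ) • ∑ j, x j‖ ^ 2 ≤
      (1 / Fintype.card ι : ℝ) * ∑ i, ‖x i‖ ^ 2 := by
  rw [average_norm_sub_average_sq]
  linarith [sq_nonneg ‖(1 / Fintype.card ι : ℝ) • ∑ j, x j‖]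

theorem average_norm_sub_average_sq_le_of_norm_sub_le (g h : ι → V) {c σ : ℝ}
    (hc : 8 * c ^ 2 < 1) (hgh : ∀ i, ‖g i - h i‖ ≤ c * ‖g i‖)
    (hσ : (1 / Fintype.card ι : ℝ) * ∑ i, ‖h i - (1 / Fintype.card ι : ℝ) • ∑ j, h j‖ ^ 2 ≤ σ ^ 2) :
    (1 / Fintype.card ι : ℝ) * ∑ i, ‖g i - (1 / Fintype.card ι : ℝ) • ∑ j, g j‖ ^ 2 ≤
      8 * c ^ 2 / (1 - 8 * c ^ 2) * ‖(1 / Fintype.card ι : ℝ) • ∑ j, g j‖ ^ 2 +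
        2 / (1 - 8 * c ^ 2) * σ ^ 2 := by
  have hsplit := average_norm_add_sub_average_sq_le (fun i => g i - h i) h
  simp only [sub_add_cancel] at hsplit
  have hdev := average_norm_sub_average_sq_le (fun i => g i - h i)
  have hvar := average_norm_sub_average_sq g
  set n : ℝ := (Fintype.card ι : ℝ)
  set v := 1 / n * ∑ i, ‖g i - (1 / n) • ∑ j, g j‖ ^ 2
  set M := ‖(1 / n) • ∑ j, g j‖ ^ 2
  have hv : 0 ≤ v := by positivity
  have hdev_sq : 1 / n * ∑ i, ‖g i - h i‖ ^ 2 ≤ c ^ 2 * (v + M) := by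
    have hpoint : ∑ i, ‖g i - h i‖ ^ 2 ≤ c ^ 2 * ∑ i, ‖g i‖ ^ 2 := by
      rw [mul_sum]
      gcongr with i
      calc ‖g i - h i‖ ^ 2 ≤ (c * ‖g i‖) ^ 2 := pow_le_pow_left₀ (norm_nonneg _) (hgh i) 2
        _ = c ^ 2 * ‖g i‖ ^ 2 := mul_pow _ _ _
    rw [show v + M = 1 / n * ∑ i, ‖g i‖ ^ 2 by linarith, mul_left_comm]
    gcongr
  have hself : v ≤ 2 * c ^ 2 * (v + M) + 2 * σ ^ 2 := by linarith
  rw [div_mul_eq_mul_div, div_mul_eq_mul_div, ← add_div, le_div_iff₀ (by linarith)]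
  nlinarith [sq_nonneg c, sq_nonneg ‖(1 / n) • ∑ j, g j‖]

end FiniteFamily

theorem norm_moreau_grad_sub_grad_le {E : Type*} [SeminormedAddCommGroup E] [NormedSpace ℝ E]
    {f' : E → E} {L lam : ℝ} (hlam : 0 < lam) (hlip : ∀ x y, ‖f' x - f' y‖ ≤ L * ‖x - y‖)
    {w θ : E} (hfoc : f' θ + lam • (θ - w) = 0) :
    ‖lam • (w - θ) - f' w‖ ≤ L / lam * ‖lam • (w - θ)‖ := by
  have hgrad : lam • (w - θ) = f' θ := by
    rw [eq_neg_of_add_eq_zero_left hfoc, ← smul_neg, neg_sub]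
  calc ‖lam • (w - θ) - f' w‖ = ‖f' θ - f' w‖ := by rw [hgrad]
    _ ≤ L * ‖θ - w‖ := hlip θ w
    _ = L / lam * ‖lam • (w - θ)‖ := by
      rw [norm_smul, Real.norm_of_nonneg hlam.le, norm_sub_rev]
      field_simp

theorem bounded_diversity_moreau_nonconvex_general
    {d N : ℕ}
    (f' : Fin N → EuclideanSpace ℝ (Fin d) → EuclideanSpace ℝ (Fin d))
    (L lam σf : ℝ) (hL : 0 ≤ L) (hlam : 2 * Real.sqrt 2 * L < lam)
    (hlip : ∀ i x y, ‖f' i x - f' i y‖ ≤ L * ‖x - y‖)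
    (θhat : Fin N → EuclideanSpace ℝ (Fin d) → EuclideanSpace ℝ (Fin d))
    (hfoc : ∀ i w, f' i (θhat i w) + lam • (θhat i w - w) = 0)
    (hdiv : ∀ y : EuclideanSpace ℝ (Fin d),
      (1 / N : ℝ) * ∑ i, ‖f' i y - (1 / N : ℝ) • ∑ j, f' j y‖ ^ 2 ≤ σf ^ 2)
    (w : EuclideanSpace ℝ (Fin d)) :
    (1 / N : ℝ) *
        ∑ i, ‖lam • (w - θhat i w) - (1 / N : ℝ) • ∑ j, lam • (w - θhat j w)‖ ^ 2 ≤
      8 * L ^ 2 / (lam ^ 2 - 8 * L ^ 2) *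
          ‖(1 / N : ℝ) • ∑ j, lam • (w - θhat j w)‖ ^ 2
        + 2 * lam ^ 2 / (lam ^ 2 - 8 * L ^ 2) * σf ^ 2 := by
  have hlam0 : 0 < lam := lt_of_le_of_lt (by positivity) hlam
  have hlam_sq : 8 * L ^ 2 < lam ^ 2 := by
    have h := pow_lt_pow_left₀ hlam (by positivity) two_ne_zero
    rwa [mul_pow, mul_pow, Real.sq_sqrt zero_le_two, show (2 : ℝ) ^ 2 * 2 = 8 by norm_num] at h
  have hc : 8 * (L / lam) ^ 2 < 1 := by
    rw [div_pow, mul_div_assoc', div_lt_one (by positivity)]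
    exact hlam_sq
  have key := average_norm_sub_average_sq_le_of_norm_sub_le (fun i => lam • (w - θhat i w))
    (fun i => f' i w) hc (fun i => norm_moreau_grad_sub_grad_le hlam0 (hlip i) (hfoc i w))
    (by simpa only [Fintype.card_fin] using hdiv w)
  simp only [Fintype.card_fin] at key
  convert key using 3 <;> field_simp

theorem bounded_diversity_moreau_nonconvex
    {d N : ℕ} (hN : 0 < N)
    (f : Fin N → EuclideanSpace ℝ (Fin d) → ℝ)
    (f' : Fin N → EuclideanSpace ℝ (Fin d) → EuclideanSpace ℝ (Fin d))
    (L lam σf : ℝ) (hL : 0 ≤ L) (hlam : 2 * Real.sqrt 2 * L < lam)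
    (hdiff : ∀ i x, HasGradientAt (f i) (f' i x) x)
    (hlip : ∀ i x y, ‖f' i x - f' i y‖ ≤ L * ‖x - y‖)
    (θhat : Fin N → EuclideanSpace ℝ (Fin d) → EuclideanSpace ℝ (Fin d))
    (hmin : ∀ i w θ, f i (θhat i w) + lam / 2 * ‖θhat i w - w‖ ^ 2 ≤
      f i θ + lam / 2 * ‖θ - w‖ ^ 2)
    (hfoc : ∀ i w, f' i (θhat i w) + lam • (θhat i w - w) = 0)
    (hdiv : ∀ y : EuclideanSpace ℝ (Fin d),
      (1 / N : ℝ) * ∑ i, ‖f' i y - (1 / N : ℝ) • ∑ j, f' j y‖ ^ 2 ≤ σf ^ 2)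
    (w : EuclideanSpace ℝ (Fin d)) :
    (1 / N : ℝ) *
        ∑ i, ‖lam • (w - θhat i w) - (1 / N : ℝ) • ∑ j, lam • (w - θhat j w)‖ ^ 2 ≤
      8 * L ^ 2 / (lam ^ 2 - 8 * L ^ 2) *
          ‖(1 / N : ℝ) • ∑ j, lam • (w - θhat j w)‖ ^ 2
        + 2 * lam ^ 2 / (lam ^ 2 - 8 * L ^ 2) * σf ^ 2 :=
  bounded_diversity_moreau_nonconvex_general f' L lam σf hL hlam hlip θhat hfoc hdiv w
end
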